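/- arXiv:1801.09270 — 2 statements merged into one kernel-verified Lean document; each statement's English description precedes it below -/
import Mathlib

section
/- Let (C, ∂) be a free, finitely generated chain complex over S = 𝔽₂[U] and let B₁ and B₂ be two bases of C over S. Then Φ_{B₁} and Φ_{B₂} are chain homotopic over S: there exists an S-linear map H : C → C with Φ_{B₁} + Φ_{B₂} = ∂ ∘ H + H ∘ ∂. (Lemma 3.3 of the paper.) -/
noncomputable section

abbrev F2 : Type := ZMod 2

/-- `S = 𝔽₂[U]`, the polynomial ring over `𝔽₂`. -/
abbrev S2 : Type := Polynomial F2

/-- The map `Φ_B` obtained by formally differentiating (with respect to `U`) the matrix of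
the differential `∂` in the basis `B`: if `∂ e_i = Σ_j P_{ij} e_j` then
`Φ_B e_i = Σ_j P'_{ij} e_j`. -/
def Phi {C ι : Type} [AddCommGroup C] [Module S2 C] (B : Module.Basis ι S2 C)
    (d : C →ₗ[S2] C) : C →ₗ[S2] C :=
  B.constr S2 fun i => (B.repr (d (B i))).sum fun j p => (Polynomial.derivative p) • B j

/-!
Write `δ_B` for the additive map differentiating coordinates in the basis `B`. It satisfies the
Leibniz rule `δ_B (p • x) = p' • x + p • δ_B x`, so it is not linear, but the commutator
`δ_B ∘ ∂ - ∂ ∘ δ_B` and the difference `δ_{B₁} - δ_{B₂}` are: the `p'` terms cancel. Since `δ_B`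
kills the basis vectors, `Φ_B = δ_B ∘ ∂ - ∂ ∘ δ_B`, hence
`Φ_{B₁} - Φ_{B₂} = H ∘ ∂ - ∂ ∘ H` with `H = δ_{B₁} - δ_{B₂}`; in characteristic 2 the signs disappear.
-/

open Polynomial

namespace Module.Basis

variable {R M ι ι' : Type*} [CommRing R] [AddCommGroup M] [Module R[X] M]

def coordDeriv (B : Basis ι R[X] M) : M →+ M where
  toFun x := (B.repr x).sum fun j p => derivative p • B j
  map_zero' := by simp
  map_add' x y := by
    rw [map_add]
    exact Finsupp.sum_add_index' (by simp) fun _ _ _ => by rw [map_add, add_smul]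

variable (B : Basis ι R[X] M) (B' : Basis ι' R[X] M) (d : M →ₗ[R[X]] M)

theorem coordDeriv_apply (x : M) :
    B.coordDeriv x = (B.repr x).sum fun j p => derivative p • B j :=
  rfl

@[simp]
theorem coordDeriv_self (i : ι) : B.coordDeriv (B i) = 0 := by
  simp [coordDeriv_apply]

theorem coordDeriv_smul (p : R[X]) (x : M) :
    B.coordDeriv (p • x) = derivative p • x + p • B.coordDeriv x := by
  simp only [coordDeriv_apply, map_smul]
  rw [Finsupp.sum_smul_index' (by simp)]
  simp only [smul_eq_mul, derivative_mul, add_smul, mul_smul, Finsupp.sum_add,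
    ← Finsupp.smul_sum]
  rw [← Finsupp.linearCombination_apply, B.linearCombination_repr]

def coordDerivSub : M →ₗ[R[X]] M where
  toFun x := B.coordDeriv x - B'.coordDeriv x
  map_add' x y := by simp only [map_add]; abel
  map_smul' p x := by
    simp only [coordDeriv_smul, RingHom.id_apply, smul_sub]
    abel

def coordDerivBracket : M →ₗ[R[X]] M where
  toFun x := B.coordDeriv (d x) - d (B.coordDeriv x)
  map_add' x y := by simp only [map_add]; abel
  map_smul' p x := by
    simp only [map_smul, coordDeriv_smul, map_add, RingHom.id_apply, smul_sub]
    abel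

theorem constr_coordDeriv_eq_coordDerivBracket :
    B.constr R[X] (fun i => B.coordDeriv (d (B i))) = B.coordDerivBracket d :=
  B.ext fun i => by simp [coordDerivBracket]

theorem coordDerivBracket_sub_coordDerivBracket :
    B.coordDerivBracket d - B'.coordDerivBracket d =
      B.coordDerivSub B' ∘ₗ d - d ∘ₗ B.coordDerivSub B' := by
  ext x
  simp only [LinearMap.sub_apply, LinearMap.comp_apply, coordDerivBracket, coordDerivSub,
    LinearMap.coe_mk, AddHom.coe_mk, map_sub]
  abel

end Module.Basis

theorem neg_eq_self_of_charTwo {R M : Type*} [Ring R] [CharP R 2] [AddCommGroup M] [Module R M]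
    (x : M) : -x = x := by
  rw [← neg_one_smul R x, CharTwo.neg_eq, one_smul]

theorem Phi_welldefined_up_to_chain_homotopy_general
    {C ι₁ ι₂ : Type} [AddCommGroup C] [Module S2 C]
    (d : C →ₗ[S2] C)
    (B₁ : Module.Basis ι₁ S2 C) (B₂ : Module.Basis ι₂ S2 C) :
    ∃ H : C →ₗ[S2] C, Phi B₁ d + Phi B₂ d = d ∘ₗ H + H ∘ₗ d := by
  have hPhi {ι : Type} (B : Module.Basis ι S2 C) : Phi B d = B.coordDerivBracket d :=
    B.constr_coordDeriv_eq_coordDerivBracket d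
  refine ⟨B₁.coordDerivSub B₂, ?_⟩
  have key := B₁.coordDerivBracket_sub_coordDerivBracket B₂ d
  rw [← hPhi, ← hPhi, sub_eq_add_neg, sub_eq_add_neg, neg_eq_self_of_charTwo (R := S2),
    neg_eq_self_of_charTwo (R := S2)] at key
  rw [key, add_comm]

/-- **Lemma 3.3**: for two bases `B₁`, `B₂` of a free, finitely generated chain complex
`(C, ∂)` over `𝔽₂[U]`, the maps `Φ_{B₁}` and `Φ_{B₂}` are chain homotopic over `𝔽₂[U]`. -/
theorem Phi_welldefined_up_to_chain_homotopy
    {C ι₁ ι₂ : Type} [AddCommGroup C] [Module S2 C] [Fintype ι₁] [Fintype ι₂]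
    (d : C →ₗ[S2] C) (hd : d ∘ₗ d = 0)
    (B₁ : Module.Basis ι₁ S2 C) (B₂ : Module.Basis ι₂ S2 C) :
    ∃ H : C →ₗ[S2] C, Phi B₁ d + Phi B₂ d = d ∘ₗ H + H ∘ₗ d :=
  Phi_welldefined_up_to_chain_homotopy_general d B₁ B₂

end
end

section
/- Let (C, ∂) be a free, finitely generated chain complex over R = 𝔽₂[[U]]. If H⁺(C) is finite-dimensional over 𝔽₂, then the connecting homomorphism δ : H⁺(C) → H⁻(C) is an isomorphism. (Claim stated in Section 1.3 of the paper.) -/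
open scoped TensorProduct

noncomputable section

abbrev R2 : Type := PowerSeries F2
abbrev L2 : Type := LaurentSeries F2

/-- The inclusion `ι : C → C^∞ = L ⊗_R C`, `x ↦ 1 ⊗ x`. -/
def iotaMap (N : Type) [AddCommGroup N] [Module R2 N] : N →ₗ[R2] L2 ⊗[R2] N :=
  TensorProduct.mk R2 L2 N 1

/-- The differential `∂^∞` on `C^∞ = L ⊗_R C`. -/
def dInf {N : Type} [AddCommGroup N] [Module R2 N] (f : N →ₗ[R2] N) :
    L2 ⊗[R2] N →ₗ[R2] L2 ⊗[R2] N :=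
  (LinearMap.baseChange L2 f).restrictScalars R2

/-- The quotient `C⁺ = C^∞ / ι(C)`. -/
abbrev CPlus (N : Type) [AddCommGroup N] [Module R2 N] : Type :=
  (L2 ⊗[R2] N) ⧸ LinearMap.range (iotaMap N)

/-- The differential `∂⁺` induced on `C⁺`. -/
def dPlusMap {N : Type} [AddCommGroup N] [Module R2 N] (f : N →ₗ[R2] N) :
    CPlus N →ₗ[R2] CPlus N :=
  Submodule.mapQ _ _ (dInf f) (by
    rintro _ ⟨x, rfl⟩
    simp only [Submodule.mem_comap]
    exact ⟨f x, by simp [iotaMap, dInf]⟩)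

/-- The homology `ker f / im f` of a differential `f` with `f ∘ f = 0`. -/
abbrev homologyOf {N : Type} [AddCommGroup N] [Module R2 N] (f : N →ₗ[R2] N) : Type :=
  LinearMap.ker f ⧸ (LinearMap.range f).comap (LinearMap.ker f).subtype

/-- Any `R = 𝔽₂[[U]]`-module is an `𝔽₂`-vector space. -/
instance instModuleF2 {X : Type} [AddCommGroup X] [Module R2 X] :
    Module F2 X :=
  Module.compHom X (algebraMap F2 R2)

instance instTowerF2 {X : Type} [AddCommGroup X] [Module R2 X] :
    IsScalarTower F2 R2 X :=
  ⟨fun a r x => by rw [Algebra.smul_def, mul_smul]; rfl⟩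

/-- The map induced on homology by a chain map. -/
def inducedHom {N1 N2 : Type} [AddCommGroup N1] [Module R2 N1] [AddCommGroup N2] [Module R2 N2]
    (d1 : N1 →ₗ[R2] N1) (d2 : N2 →ₗ[R2] N2) (f : N1 →ₗ[R2] N2)
    (hf : d2 ∘ₗ f = f ∘ₗ d1) :
    homologyOf d1 →ₗ[R2] homologyOf d2 :=
  Submodule.liftQ _
    ((Submodule.mkQ _) ∘ₗ f.restrict (p := LinearMap.ker d1) (q := LinearMap.ker d2)
      (fun x hx => by
        have h := LinearMap.congr_fun hf x
        simp only [LinearMap.comp_apply] at h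
        simp only [LinearMap.mem_ker] at hx ⊢
        rw [h, hx, map_zero]))
    (by
      rintro ⟨x, hxk⟩ hx
      simp only [Submodule.mem_comap, Submodule.coe_subtype, LinearMap.mem_range] at hx
      obtain ⟨w, hw⟩ := hx
      simp only [LinearMap.mem_ker, LinearMap.comp_apply, Submodule.mkQ_apply]
      rw [Submodule.Quotient.mk_eq_zero]
      simp only [Submodule.mem_comap, Submodule.coe_subtype, LinearMap.mem_range]
      refine ⟨f w, ?_⟩
      have h := LinearMap.congr_fun hf w
      simp only [LinearMap.comp_apply] at h
      rw [h, hw]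
      rfl)

/-- The map `H⁻(C) → H^∞(C)` induced by `ι`. -/
def mapMinusInf {M : Type} [AddCommGroup M] [Module R2 M] (d : M →ₗ[R2] M) :
    homologyOf d →ₗ[R2] homologyOf (dInf d) :=
  inducedHom d (dInf d) (iotaMap M) (by
    ext x
    simp [dInf, iotaMap])

/-- The map `H^∞(C) → H⁺(C)` induced by the quotient projection. -/
def mapInfPlus {M : Type} [AddCommGroup M] [Module R2 M] (d : M →ₗ[R2] M) :
    homologyOf (dInf d) →ₗ[R2] homologyOf (dPlusMap d) :=
  inducedHom (dInf d) (dPlusMap d) (Submodule.mkQ _) (by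
    ext x
    simp [dPlusMap, Submodule.mapQ_apply])

/-- `δ : H⁺(C) → H⁻(C)` is the connecting homomorphism: the class of a cycle `x ∈ C⁺` is
sent to the class of the unique `y ∈ C` with `ι y = ∂^∞ x̃` for a lift `x̃` of `x`. -/
def IsConnecting {M : Type} [AddCommGroup M] [Module R2 M] (d : M →ₗ[R2] M)
    (δ : homologyOf (dPlusMap d) →ₗ[R2] homologyOf d) : Prop :=
  ∀ (x : L2 ⊗[R2] M) (y : M), iotaMap M y = dInf d x →
    ∀ (h1 : Submodule.mkQ (LinearMap.range (iotaMap M)) x ∈ LinearMap.ker (dPlusMap d))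
      (h2 : y ∈ LinearMap.ker d),
      δ (Submodule.Quotient.mk ⟨Submodule.mkQ (LinearMap.range (iotaMap M)) x, h1⟩) =
        Submodule.Quotient.mk ⟨y, h2⟩


section Aux

instance isLocalizedModule_iota (N : Type) [AddCommGroup N] [Module R2 N] :
    IsLocalizedModule (Submonoid.powers (PowerSeries.X : R2)) (iotaMap N) :=
  (isLocalizedModule_iff_isBaseChange (Submonoid.powers (PowerSeries.X : R2)) L2 _).mpr
    (TensorProduct.isBaseChange R2 N L2)

lemma iota_injective (N : Type) [AddCommGroup N] [Module R2 N] [Module.Free R2 N] :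
    Function.Injective (iotaMap N) := by
  intro a b hab
  have h0 : iotaMap N (a - b) = 0 := by rw [map_sub, hab, sub_self]
  obtain ⟨s, hs⟩ := (IsLocalizedModule.eq_zero_iff (Submonoid.powers (PowerSeries.X : R2))
    (iotaMap N)).mp h0
  obtain ⟨n, hn⟩ := s.2
  have hn' : (PowerSeries.X : R2) ^ n = (s : R2) := hn
  have hs' : (PowerSeries.X : R2) ^ n • (a - b) = 0 := by rw [hn']; exact hs
  have hX : (PowerSeries.X : R2) ^ n ≠ 0 := pow_ne_zero _ PowerSeries.X_ne_zero
  exact sub_eq_zero.mp ((smul_eq_zero.mp hs').resolve_left hX)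

lemma dInf_iota {N : Type} [AddCommGroup N] [Module R2 N] (d : N →ₗ[R2] N) (y : N) :
    dInf d (iotaMap N y) = iotaMap N (d y) := by
  simp [dInf, iotaMap]

lemma dPlus_mkQ {N : Type} [AddCommGroup N] [Module R2 N] (d : N →ₗ[R2] N)
    (x : L2 ⊗[R2] N) :
    dPlusMap d (Submodule.mkQ (LinearMap.range (iotaMap N)) x) =
      Submodule.mkQ (LinearMap.range (iotaMap N)) (dInf d x) := by
  simp [dPlusMap, Submodule.mapQ_apply]

lemma mapInfPlus_mk {N : Type} [AddCommGroup N] [Module R2 N] (d : N →ₗ[R2] N)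
    (x : L2 ⊗[R2] N) (hx : x ∈ LinearMap.ker (dInf d))
    (h2 : Submodule.mkQ (LinearMap.range (iotaMap N)) x ∈ LinearMap.ker (dPlusMap d)) :
    mapInfPlus d (Submodule.Quotient.mk ⟨x, hx⟩) =
      Submodule.Quotient.mk ⟨Submodule.mkQ (LinearMap.range (iotaMap N)) x, h2⟩ := rfl

lemma mapMinusInf_mk {N : Type} [AddCommGroup N] [Module R2 N] (d : N →ₗ[R2] N)
    (y : N) (hy : y ∈ LinearMap.ker d) (h2 : iotaMap N y ∈ LinearMap.ker (dInf d)) :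
    mapMinusInf d (Submodule.Quotient.mk ⟨y, hy⟩) =
      Submodule.Quotient.mk ⟨iotaMap N y, h2⟩ := rfl

end Aux

set_option maxHeartbeats 1000000

/-- **Section 1.3**: if `(C,∂)` is a free, finitely generated chain complex over `𝔽₂[[U]]`
and `H⁺(C)` is finite-dimensional over `𝔽₂`, then the connecting homomorphism
`δ : H⁺(C) → H⁻(C)` is an isomorphism. -/
theorem connecting_iso_of_finite_Hplus
    (M : Type) [AddCommGroup M] [Module R2 M] [Module.Free R2 M] [Module.Finite R2 M]
    (d : M →ₗ[R2] M) (hd : d ∘ₗ d = 0)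
    (δ : homologyOf (dPlusMap d) →ₗ[R2] homologyOf d) (hδ : IsConnecting d δ)
    (hfin : Module.Finite F2 (homologyOf (dPlusMap d))) :
    Function.Bijective δ := by
  classical
  have hiota := iota_injective M
  have hdd : ∀ x : L2 ⊗[R2] M, dInf d (dInf d x) = 0 := by
    intro x
    have hcomp : (LinearMap.baseChange L2 d) ∘ₗ (LinearMap.baseChange L2 d)
        = LinearMap.baseChange L2 (d ∘ₗ d) := (LinearMap.baseChange_comp d d).symm
    have h2 : (LinearMap.baseChange L2 d) ((LinearMap.baseChange L2 d) x) = 0 := by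
      have := congrArg (fun g => g x) hcomp
      simpa [hd] using this
    simpa [dInf] using h2
  -- `C⁺` is `X`-power-torsion
  have torCP : ∀ z : CPlus M, ∃ n : ℕ, (PowerSeries.X : R2) ^ n • z = 0 := by
    intro z
    obtain ⟨x, rfl⟩ := Submodule.Quotient.mk_surjective _ z
    obtain ⟨⟨m, s⟩, hs⟩ := IsLocalizedModule.surj
      (Submonoid.powers (PowerSeries.X : R2)) (iotaMap M) x
    obtain ⟨n, hn⟩ := s.2
    have hn' : (PowerSeries.X : R2) ^ n = (s : R2) := hn
    refine ⟨n, ?_⟩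
    have hx : (PowerSeries.X : R2) ^ n • x = iotaMap M m := by rw [hn']; exact hs
    rw [← Submodule.Quotient.mk_smul, hx, Submodule.Quotient.mk_eq_zero]
    exact ⟨m, rfl⟩
  -- hence `H⁺` is `X`-power-torsion
  have torHp : ∀ h : homologyOf (dPlusMap d), ∃ n : ℕ, (PowerSeries.X : R2) ^ n • h = 0 := by
    intro h
    obtain ⟨⟨z, hz⟩, rfl⟩ := Submodule.Quotient.mk_surjective _ h
    obtain ⟨n, hn⟩ := torCP z
    refine ⟨n, ?_⟩
    have hzz : ((PowerSeries.X : R2) ^ n • (⟨z, hz⟩ : LinearMap.ker (dPlusMap d))) = 0 :=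
      Subtype.ext hn
    rw [← Submodule.Quotient.mk_smul, hzz, Submodule.Quotient.mk_zero]
  -- uniform torsion bound via finiteness
  haveI : Finite (homologyOf (dPlusMap d)) := Module.finite_of_finite F2
  haveI : Fintype (homologyOf (dPlusMap d)) := Fintype.ofFinite _
  choose nn hnn using torHp
  obtain ⟨N, hN⟩ : ∃ N : ℕ, ∀ h : homologyOf (dPlusMap d),
      (PowerSeries.X : R2) ^ N • h = 0 := by
    refine ⟨Finset.univ.sup nn, fun h => ?_⟩
    have hle : nn h ≤ Finset.univ.sup nn := Finset.le_sup (Finset.mem_univ h)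
    calc (PowerSeries.X : R2) ^ Finset.univ.sup nn • h
        = ((PowerSeries.X : R2) ^ (Finset.univ.sup nn - nn h) *
            (PowerSeries.X : R2) ^ nn h) • h := by rw [← pow_add, Nat.sub_add_cancel hle]
      _ = (PowerSeries.X : R2) ^ (Finset.univ.sup nn - nn h) •
            ((PowerSeries.X : R2) ^ nn h • h) := mul_smul _ _ _
      _ = 0 := by rw [hnn h, smul_zero]
  -- divisibility in `H^∞`
  have div : ∀ (g : homologyOf (dInf d)) (n : ℕ),
      ∃ g', (PowerSeries.X : R2) ^ n • g' = g := by
    intro g n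
    obtain ⟨⟨x, hx⟩, rfl⟩ := Submodule.Quotient.mk_surjective _ g
    have ha : (algebraMap R2 L2) ((PowerSeries.X : R2) ^ n) ≠ 0 := by
      intro h0
      have hz : ((PowerSeries.X : R2) ^ n) = 0 := by
        apply HahnSeries.ofPowerSeries_injective (Γ := ℤ)
        rw [map_zero]
        exact h0
      exact pow_ne_zero n PowerSeries.X_ne_zero hz
    have hu : IsUnit ((algebraMap R2 L2) ((PowerSeries.X : R2) ^ n)) :=
      IsLocalization.map_units (M := Submonoid.powers (PowerSeries.X : R2)) L2
        ⟨(PowerSeries.X : R2) ^ n, ⟨n, rfl⟩⟩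
    have hsmul : (PowerSeries.X : R2) ^ n • (((hu.unit⁻¹ : L2ˣ) : L2) • x) = x := by
      rw [algebra_compatible_smul L2 ((PowerSeries.X : R2) ^ n)
        ((((hu.unit⁻¹ : L2ˣ) : L2)) • x)]
      have hstep : (algebraMap R2 L2) ((PowerSeries.X : R2) ^ n) • ((hu.unit⁻¹ : L2ˣ) : L2) • x
          = hu.unit • hu.unit⁻¹ • x := by
        rw [Units.smul_def, Units.smul_def, IsUnit.unit_spec]
      rw [hstep, smul_inv_smul]
    have hx' : (((hu.unit⁻¹ : L2ˣ) : L2)) • x ∈ LinearMap.ker (dInf d) := by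
      have hL : dInf d ((((hu.unit⁻¹ : L2ˣ) : L2)) • x)
          = (((hu.unit⁻¹ : L2ˣ) : L2)) • dInf d x := by
        simp only [dInf, LinearMap.restrictScalars_apply]
        exact map_smul (LinearMap.baseChange L2 d) _ _
      rw [LinearMap.mem_ker, hL, LinearMap.mem_ker.mp hx, smul_zero]
    have hsub : ((PowerSeries.X : R2) ^ n •
        (⟨(((hu.unit⁻¹ : L2ˣ) : L2)) • x, hx'⟩ : LinearMap.ker (dInf d)))
        = ⟨x, hx⟩ := Subtype.ext hsmul
    refine ⟨Submodule.Quotient.mk ⟨(((hu.unit⁻¹ : L2ˣ) : L2)) • x, hx'⟩, ?_⟩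
    rw [← Submodule.Quotient.mk_smul, hsub]
  -- the map `ψ : H^∞ → H⁺` is zero
  have hψ : ∀ g : homologyOf (dInf d), mapInfPlus d g = 0 := by
    intro g
    obtain ⟨g', hg'⟩ := div g N
    rw [← hg', map_smul, hN]
  -- injectivity of `δ`
  have hinj : ∀ h : homologyOf (dPlusMap d), δ h = 0 → h = 0 := by
    intro h hh
    obtain ⟨⟨z, hz⟩, rfl⟩ := Submodule.Quotient.mk_surjective _ h
    obtain ⟨x, rfl⟩ := Submodule.Quotient.mk_surjective (LinearMap.range (iotaMap M)) z
    have hz' : Submodule.mkQ (LinearMap.range (iotaMap M)) x ∈ LinearMap.ker (dPlusMap d) := hz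
    have hmem : dInf d x ∈ LinearMap.range (iotaMap M) := by
      have h4 := LinearMap.mem_ker.mp hz'
      rw [dPlus_mkQ, Submodule.mkQ_apply, Submodule.Quotient.mk_eq_zero] at h4
      exact h4
    obtain ⟨y, hy⟩ := hmem
    have hy2 : y ∈ LinearMap.ker d := by
      rw [LinearMap.mem_ker]
      apply hiota
      rw [← dInf_iota, hy, hdd x, map_zero]
    have hδx := hδ x y hy hz' hy2
    simp only [Submodule.mkQ_apply] at hδx
    rw [hδx, Submodule.Quotient.mk_eq_zero] at hh
    simp only [Submodule.mem_comap, Submodule.coe_subtype, LinearMap.mem_range] at hh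
    obtain ⟨m, hm⟩ := hh
    have hx' : x - iotaMap M m ∈ LinearMap.ker (dInf d) := by
      rw [LinearMap.mem_ker, map_sub, ← hy, dInf_iota, hm, sub_self]
    have hk2 : Submodule.mkQ (LinearMap.range (iotaMap M)) (x - iotaMap M m)
        ∈ LinearMap.ker (dPlusMap d) := by
      rw [LinearMap.mem_ker, dPlus_mkQ, LinearMap.mem_ker.mp hx', Submodule.mkQ_apply,
        Submodule.Quotient.mk_zero]
    have key := hψ (Submodule.Quotient.mk ⟨x - iotaMap M m, hx'⟩)
    rw [mapInfPlus_mk d _ hx' hk2] at key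
    have hxx : (⟨Submodule.mkQ (LinearMap.range (iotaMap M)) (x - iotaMap M m), hk2⟩ :
        LinearMap.ker (dPlusMap d)) = ⟨Submodule.Quotient.mk x, hz⟩ := by
      apply Subtype.ext
      show Submodule.mkQ (LinearMap.range (iotaMap M)) (x - iotaMap M m)
          = Submodule.Quotient.mk x
      rw [map_sub]
      have hm0 : Submodule.mkQ (LinearMap.range (iotaMap M)) (iotaMap M m) = 0 := by
        rw [Submodule.mkQ_apply, Submodule.Quotient.mk_eq_zero]
        exact ⟨m, rfl⟩
      rw [hm0, sub_zero, Submodule.mkQ_apply]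
    rw [hxx] at key
    exact key
  -- `φ : H⁻ → H^∞` is surjective
  have hφsurj : Function.Surjective (mapMinusInf d) := by
    intro g
    obtain ⟨⟨x, hx⟩, rfl⟩ := Submodule.Quotient.mk_surjective _ g
    have hk : Submodule.mkQ (LinearMap.range (iotaMap M)) x ∈ LinearMap.ker (dPlusMap d) := by
      rw [LinearMap.mem_ker, dPlus_mkQ, LinearMap.mem_ker.mp hx, Submodule.mkQ_apply,
        Submodule.Quotient.mk_zero]
    have key := hψ (Submodule.Quotient.mk ⟨x, hx⟩)
    rw [mapInfPlus_mk d x hx hk, Submodule.Quotient.mk_eq_zero] at key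
    simp only [Submodule.mem_comap, Submodule.coe_subtype, LinearMap.mem_range] at key
    obtain ⟨z, hzval⟩ := key
    obtain ⟨w, rfl⟩ := Submodule.Quotient.mk_surjective (LinearMap.range (iotaMap M)) z
    rw [← Submodule.mkQ_apply (LinearMap.range (iotaMap M)) w, dPlus_mkQ] at hzval
    simp only [Submodule.mkQ_apply] at hzval
    rw [Submodule.Quotient.eq] at hzval
    obtain ⟨y0, hy0⟩ := hzval
    have hιy : iotaMap M (-y0) = x - dInf d w := by
      rw [map_neg, hy0, neg_sub]
    have hy2 : (-y0) ∈ LinearMap.ker d := by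
      rw [LinearMap.mem_ker]
      apply hiota
      rw [← dInf_iota, hιy, map_sub, hdd w, LinearMap.mem_ker.mp hx, sub_zero, map_zero]
    have h3 : iotaMap M (-y0) ∈ LinearMap.ker (dInf d) := by
      rw [LinearMap.mem_ker, dInf_iota, LinearMap.mem_ker.mp hy2, map_zero]
    refine ⟨Submodule.Quotient.mk ⟨-y0, hy2⟩, ?_⟩
    rw [mapMinusInf_mk d _ hy2 h3]
    apply (Submodule.Quotient.eq _).mpr
    rw [Submodule.mem_comap]
    rw [LinearMap.mem_range]
    refine ⟨-w, ?_⟩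
    rw [map_neg]
    have hval : (((⟨iotaMap M (-y0), h3⟩ - ⟨x, hx⟩ : LinearMap.ker (dInf d))) : L2 ⊗[R2] M)
        = iotaMap M (-y0) - x := rfl
    show -(dInf d w) = (((⟨iotaMap M (-y0), h3⟩ - ⟨x, hx⟩ : LinearMap.ker (dInf d))) : L2 ⊗[R2] M)
    rw [hval, hιy]
    abel
  -- `H^∞` is finitely generated, hence trivial by Nakayama
  haveI : IsNoetherian R2 M := isNoetherian_of_isNoetherianRing_of_finite R2 M
  haveI : Module.Finite R2 (LinearMap.ker d) :=
    Module.Finite.iff_fg.mpr (IsNoetherian.noetherian _)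
  haveI : Module.Finite R2 (homologyOf d) := Module.Finite.quotient R2 _
  haveI : Module.Finite R2 (homologyOf (dInf d)) :=
    Module.Finite.of_surjective (mapMinusInf d) hφsurj
  have hXmem : (PowerSeries.X : R2) ∈ IsLocalRing.maximalIdeal R2 := by
    rw [IsLocalRing.mem_maximalIdeal, mem_nonunits_iff]
    intro h
    rw [PowerSeries.isUnit_iff_constantCoeff, PowerSeries.constantCoeff_X] at h
    exact not_isUnit_zero h
  have htop : (⊤ : Submodule R2 (homologyOf (dInf d))) = ⊥ := by
    apply Submodule.eq_bot_of_le_smul_of_le_jacobson_bot (IsLocalRing.maximalIdeal R2)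
    · exact Module.Finite.fg_top
    · intro g _
      obtain ⟨g', hg'⟩ := div g 1
      rw [← hg', pow_one]
      exact Submodule.smul_mem_smul hXmem Submodule.mem_top
    · rw [IsLocalRing.jacobson_eq_maximalIdeal ⊥ bot_ne_top]
  have hHi : ∀ g : homologyOf (dInf d), g = 0 := fun g =>
    (Submodule.eq_bot_iff _).mp htop g Submodule.mem_top
  -- surjectivity of `δ`
  have hsurj : Function.Surjective δ := by
    intro h
    obtain ⟨⟨y, hy⟩, rfl⟩ := Submodule.Quotient.mk_surjective _ h
    have h3 : iotaMap M y ∈ LinearMap.ker (dInf d) := by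
      rw [LinearMap.mem_ker, dInf_iota, LinearMap.mem_ker.mp hy, map_zero]
    have hz := hHi (mapMinusInf d (Submodule.Quotient.mk ⟨y, hy⟩))
    rw [mapMinusInf_mk d y hy h3, Submodule.Quotient.mk_eq_zero] at hz
    simp only [Submodule.mem_comap, Submodule.coe_subtype, LinearMap.mem_range] at hz
    obtain ⟨x, hx⟩ := hz
    have h1 : Submodule.mkQ (LinearMap.range (iotaMap M)) x ∈ LinearMap.ker (dPlusMap d) := by
      rw [LinearMap.mem_ker, dPlus_mkQ, hx, Submodule.mkQ_apply, Submodule.Quotient.mk_eq_zero]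
      exact ⟨y, rfl⟩
    exact ⟨_, hδ x y hx.symm h1 hy⟩
  exact ⟨(injective_iff_map_eq_zero δ).mpr hinj, hsurj⟩


end
end
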